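/- Let A_b, A_e, δ be positive reals, ϖ > 0, and k a positive integer. Then ∫₀^∞ exp(−A_e (y/ϖ)^δ) · exp(−A_b y^δ) · δ (A_b y^δ)^k / (y Γ(k)) dy = (A_b / (A_b + A_e ϖ^{−δ}))^k. -/

import Mathlib

open MeasureTheory Real Set

theorem pnz_best_best_closed_form
    (Ab Ae δ ϖ : ℝ) (hAb : 0 < Ab) (hAe : 0 < Ae) (hδ : 0 < δ) (hϖ : 0 < ϖ)
    (k : ℕ) (hk : 1 ≤ k) :
    ∫ y in Ioi (0 : ℝ),
      Real.exp (-(Ae * (y / ϖ) ^ δ)) *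
        (Real.exp (-(Ab * y ^ δ)) * δ * (Ab * y ^ δ) ^ k / (y * Real.Gamma k))
      = (Ab / (Ab + Ae * ϖ ^ (-δ))) ^ k := by
  have hkpos : (0:ℝ) < (k:ℝ) := by exact_mod_cast Nat.lt_of_lt_of_le Nat.zero_lt_one hk
  set c := Ab + Ae * ϖ ^ (-δ) with hc
  have hcpos : 0 < c := by positivity
  have hq : (-1:ℝ) < δ * k - 1 := by nlinarith
  have hΓpos : 0 < Real.Gamma (k:ℝ) := Real.Gamma_pos_of_pos hkpos
  have key := integral_rpow_mul_exp_neg_mul_rpow (p := δ) (q := δ * k - 1) hδ hq hcpos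
  have hrw : ∀ y ∈ Ioi (0:ℝ),
      Real.exp (-(Ae * (y / ϖ) ^ δ)) *
        (Real.exp (-(Ab * y ^ δ)) * δ * (Ab * y ^ δ) ^ k / (y * Real.Gamma k))
      = (δ * Ab ^ k / Real.Gamma k) * (y ^ (δ * (k:ℝ) - 1) * Real.exp (-c * y ^ δ)) := by
    intro y hy
    have hy0 : 0 < y := hy
    have h1 : (y / ϖ) ^ δ = y ^ δ * ϖ ^ (-δ) := by
      rw [div_rpow hy0.le hϖ.le, rpow_neg hϖ.le, div_eq_mul_inv]
    have h2 : Real.exp (-(Ae * (y / ϖ) ^ δ)) * Real.exp (-(Ab * y ^ δ))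
        = Real.exp (-(c * y ^ δ)) := by
      rw [← Real.exp_add, h1, hc]; ring_nf
    have h3 : (Ab * y ^ δ) ^ k = Ab ^ k * y ^ (δ * (k:ℝ)) := by
      rw [mul_pow, ← rpow_natCast (y ^ δ) k, ← rpow_mul hy0.le]
    have h4 : y ^ (δ * (k:ℝ) - 1) = y ^ (δ * (k:ℝ)) / y := by
      rw [rpow_sub hy0, rpow_one]
    rw [h3, h4]
    field_simp
    rw [h2]
    ring
  rw [setIntegral_congr_fun measurableSet_Ioi hrw, integral_const_mul, key]
  have h5 : (δ * (k:ℝ) - 1 + 1) / δ = (k:ℝ) := by field_simp; try ring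
  rw [h5]
  have h6 : -(δ * (k:ℝ) - 1 + 1) / δ = -(k:ℝ) := by field_simp; try ring
  rw [h6, rpow_neg hcpos.le, rpow_natCast, div_pow]
  field_simp
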